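/- Under Assumptions (K2) on κ and (L) on ℓ, for every θ ∈ ℝ^d, ρ > 0, α ≥ 0, c > 0, every measurable h : ℝ^d → ℝ^m with |h(u)| ≤ c|u|^α for all u, and every μ ∈ ℝ, there exist C < ∞ and τ₀ > 0 such that for all 0 < τ ≤ τ₀, | ∫_{{u : τ|u| > ρ}} h(τu) exp(ℓ(θ+τu)−ℓ(θ)) κ(u) du | ≤ C τ^μ. -/

import Mathlib

/-!
On `{τ|u| > ρ}` we have `|u| > ρ/τ`, so for small `τ` only large `|u|` matter. There (K2) and (L)
bound the integrand, uniformly in `τ ≤ 1`, by a multiple of `|u|^α exp(ε|u|^η − γ|u|^δ)`, which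
decays faster than any power of `|u|` because `η < δ`. Writing such a power as
`|u|^(-N) · |u|^(-(d+1))`, the first factor is at most `(τ/ρ)^N` on the region and the second is
integrable, so the integral is `O(τ^N)` for every `N ≥ 0`.
-/

open MeasureTheory Real

noncomputable section

/-- L¹ norm of a vector in ℝ^n. -/
def l1 {n : ℕ} (v : Fin n → ℝ) : ℝ := ∑ i, |v i|

open Filter Topology

theorem l1_nonneg {n : ℕ} (v : Fin n → ℝ) : 0 ≤ l1 v :=
  Finset.sum_nonneg fun _ _ => abs_nonneg _

theorem norm_le_l1 {n : ℕ} (v : Fin n → ℝ) : ‖v‖ ≤ l1 v :=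
  (pi_norm_le_iff_of_nonneg (l1_nonneg v)).2 fun i =>
    Finset.single_le_sum (f := fun j => |v j|) (fun _ _ => abs_nonneg _) (Finset.mem_univ i)

theorem l1_le_card_mul_norm {n : ℕ} (v : Fin n → ℝ) : l1 v ≤ n * ‖v‖ := by
  calc l1 v ≤ ∑ _i : Fin n, ‖v‖ := Finset.sum_le_sum fun i _ => norm_le_pi_norm v i
    _ = n * ‖v‖ := by simp

theorem l1_smul {n : ℕ} (a : ℝ) (v : Fin n → ℝ) : l1 (a • v) = |a| * l1 v := by
  simp [l1, abs_mul, Finset.mul_sum]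

theorem measurable_l1 {n : ℕ} : Measurable (l1 (n := n)) :=
  Finset.measurable_sum _ fun i _ => (measurable_pi_apply i).abs

theorem l1_rpow_neg_le {n : ℕ} {v : Fin n → ℝ} (hv : 1 ≤ l1 v) {r : ℝ} (hr : 0 ≤ r) :
    l1 v ^ (-r) ≤ 2 ^ r * (1 + ‖v‖) ^ (-r) := by
  have hle : 1 + ‖v‖ ≤ 2 * l1 v := by linarith [norm_le_l1 v]
  calc l1 v ^ (-r) = 2 ^ r * (2 * l1 v) ^ (-r) := by
        rw [mul_rpow zero_le_two (l1_nonneg v), ← mul_assoc, ← rpow_add two_pos]; simp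
    _ ≤ 2 ^ r * (1 + ‖v‖) ^ (-r) :=
        mul_le_mul_of_nonneg_left
          (rpow_le_rpow_of_nonpos (by positivity) hle (neg_nonpos.2 hr)) (by positivity)

theorem l1_rpow_neg_le_of_lt_mul {n : ℕ} {v : Fin n → ℝ} {ρ τ N : ℝ} (hρ : 0 < ρ) (hτ : 0 < τ)
    (hN : 0 ≤ N) (hv : ρ < τ * l1 v) : l1 v ^ (-N) ≤ ρ ^ (-N) * τ ^ N := by
  calc l1 v ^ (-N) ≤ (ρ / τ) ^ (-N) :=
        rpow_le_rpow_of_nonpos (by positivity) (by rw [div_le_iff₀' hτ]; exact hv.le)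
          (neg_nonpos.2 hN)
    _ = ρ ^ (-N) * τ ^ N := by
        rw [rpow_neg (div_pos hρ hτ).le, div_rpow hρ.le hτ.le, inv_div, div_eq_mul_inv,
          rpow_neg hρ.le, mul_comm]

theorem tendsto_rpow_mul_exp_neg_mul_rpow_atTop (p : ℝ) {b δ : ℝ} (hb : 0 < b) (hδ : 0 < δ) :
    Tendsto (fun t : ℝ => t ^ p * exp (-b * t ^ δ)) atTop (𝓝 0) := by
  refine ((tendsto_rpow_mul_exp_neg_mul_atTop_nhds_zero (p / δ) b hb).comp
    (tendsto_rpow_atTop hδ)).congr' ?_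
  filter_upwards [eventually_ge_atTop 0] with t ht
  simp only [Function.comp_apply, ← rpow_mul ht, mul_div_cancel₀ p hδ.ne']

theorem eventually_mul_rpow_le_mul_rpow {η δ : ℝ} (hηδ : η < δ) (ε : ℝ) {a : ℝ} (ha : 0 < a) :
    ∀ᶠ t : ℝ in atTop, ε * t ^ η ≤ a * t ^ δ := by
  have hlim : Tendsto (fun t : ℝ => ε * t ^ (-(δ - η))) atTop (𝓝 0) := by
    simpa using (tendsto_rpow_neg_atTop (sub_pos.2 hηδ)).const_mul ε
  filter_upwards [hlim.eventually_lt_const ha, eventually_gt_atTop 0] with t hlt ht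
  calc ε * t ^ η = ε * t ^ (-(δ - η)) * t ^ δ := by
        rw [mul_assoc, ← rpow_add ht]; ring_nf
    _ ≤ a * t ^ δ := by gcongr

theorem tendsto_rpow_mul_exp_sub_rpow_atTop (p : ℝ) {ε γ η δ : ℝ} (hγ : 0 < γ) (hδ : 0 < δ)
    (hηδ : η < δ) :
    Tendsto (fun t : ℝ => t ^ p * exp (ε * t ^ η - γ * t ^ δ)) atTop (𝓝 0) := by
  refine tendsto_of_tendsto_of_tendsto_of_le_of_le' tendsto_const_nhds
    (tendsto_rpow_mul_exp_neg_mul_rpow_atTop p (half_pos hγ) hδ) ?_ ?_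
  · filter_upwards [eventually_ge_atTop 0] with t ht
    positivity
  · filter_upwards [eventually_ge_atTop 0, eventually_mul_rpow_le_mul_rpow hηδ ε (half_pos hγ)]
      with t ht hle
    gcongr
    linarith

theorem norm_setIntegral_tail_le {E : Type*} [NormedAddCommGroup E] [NormedSpace ℝ E] {d : ℕ}
    (F : ℝ → (Fin d → ℝ) → E) {ρ : ℝ} (hρ : 0 < ρ)
    (hF : ∀ q : ℝ, ∃ K T : ℝ, ∀ τ u, 0 < τ → τ ≤ 1 → T ≤ l1 u → ‖F τ u‖ ≤ K * l1 u ^ (-q))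
    (μ : ℝ) :
    ∃ C τ₀ : ℝ, 0 < τ₀ ∧ ∀ τ : ℝ, 0 < τ → τ ≤ τ₀ →
      ‖∫ u in {u : Fin d → ℝ | ρ < τ * l1 u}, F τ u‖ ≤ C * τ ^ μ := by
  set N := max μ 0
  set r : ℝ := d + 1
  have hr : 0 ≤ r := by positivity
  obtain ⟨K, T, hKT⟩ := hF (N + r)
  set T' := max T 1
  have hg : Integrable fun u : Fin d → ℝ => (1 + ‖u‖) ^ (-r) :=
    integrable_one_add_norm (by simp [r])
  set I := ∫ u : Fin d → ℝ, (1 + ‖u‖) ^ (-r)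
  have hI : 0 ≤ I := integral_nonneg fun u => by positivity
  refine ⟨max K 0 * ρ ^ (-N) * 2 ^ r * I, min 1 (ρ / T'),
    lt_min one_pos (div_pos hρ (by positivity)), fun τ hτ hτ₀ => ?_⟩
  have hτ1 : τ ≤ 1 := hτ₀.trans (min_le_left _ _)
  have hT' : ρ / τ ≥ T' := by
    rw [ge_iff_le, le_div_iff₀ hτ, mul_comm]
    exact (le_div_iff₀ (by positivity)).1 (hτ₀.trans (min_le_right _ _))
  set A := max K 0 * ρ ^ (-N) * τ ^ N * 2 ^ r
  have hpt : ∀ u ∈ {u : Fin d → ℝ | ρ < τ * l1 u}, ‖F τ u‖ ≤ A * (1 + ‖u‖) ^ (-r) := by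
    intro u hu
    have hu : ρ < τ * l1 u := hu
    have hTu : T' ≤ l1 u := hT'.trans (by rw [div_le_iff₀' hτ]; exact hu.le)
    calc ‖F τ u‖ ≤ K * l1 u ^ (-(N + r)) := hKT τ u hτ hτ1 (le_of_max_le_left hTu)
      _ ≤ max K 0 * (l1 u ^ (-N) * l1 u ^ (-r)) := by
          rw [neg_add, rpow_add (one_pos.trans_le (le_of_max_le_right hTu))]
          have := l1_nonneg u
          exact mul_le_mul_of_nonneg_right (le_max_left _ _) (by positivity)
      _ ≤ max K 0 * ((ρ ^ (-N) * τ ^ N) * (2 ^ r * (1 + ‖u‖) ^ (-r))) := by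
          have := l1_nonneg u
          refine mul_le_mul_of_nonneg_left (mul_le_mul ?_ ?_ (by positivity) (by positivity))
            (le_max_right _ _)
          · exact l1_rpow_neg_le_of_lt_mul hρ hτ (le_max_right _ _) hu
          · exact l1_rpow_neg_le (le_of_max_le_right hTu) hr
      _ = A * (1 + ‖u‖) ^ (-r) := by ring
  calc ‖∫ u in {u | ρ < τ * l1 u}, F τ u‖ ≤ ∫ u in {u | ρ < τ * l1 u}, A * (1 + ‖u‖) ^ (-r) :=
        norm_integral_le_of_norm_le (hg.const_mul A).restrict
          (ae_restrict_of_forall_mem (measurableSet_lt measurable_const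
            (measurable_const.mul measurable_l1)) hpt)
    _ ≤ A * I := by
        rw [integral_const_mul]
        gcongr
        exact setIntegral_le_integral hg (ae_of_all _ fun u => by positivity)
    _ = max K 0 * ρ ^ (-N) * 2 ^ r * I * τ ^ N := by ring
    _ ≤ max K 0 * ρ ^ (-N) * 2 ^ r * I * τ ^ μ :=
        mul_le_mul_of_nonneg_left (rpow_le_rpow_of_exponent_ge hτ hτ1 (le_max_left _ _))
          (by positivity)

theorem norm_integrand_le {d m : ℕ} {κ ℓ : (Fin d → ℝ) → ℝ} {h : (Fin d → ℝ) → Fin m → ℝ}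
    {θ u : Fin d → ℝ} {τ γ δ η ε D c α : ℝ} (hτ₀ : 0 ≤ τ) (hτ₁ : τ ≤ 1) (hη : 0 ≤ η)
    (hε : 0 ≤ ε) (hc : 0 ≤ c) (hα : 0 ≤ α) (hκ₀ : 0 ≤ κ u)
    (hκ : κ u ≤ exp (-γ * l1 u ^ δ))
    (hℓ : exp (ℓ (θ + τ • u)) ≤ D * exp (ε * l1 (τ • u) ^ η))
    (hh : l1 (h (τ • u)) ≤ c * l1 (τ • u) ^ α) :
    ‖(exp (ℓ (θ + τ • u) - ℓ θ) * κ u) • h (τ • u)‖ ≤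
      c * D * exp (-ℓ θ) * (l1 u ^ α * exp (ε * l1 u ^ η - γ * l1 u ^ δ)) := by
  have hD : 0 ≤ D := nonneg_of_mul_nonneg_left ((exp_pos _).le.trans hℓ) (exp_pos _)
  have hs := l1_nonneg u
  have hτs : l1 (τ • u) ≤ l1 u := by
    rw [l1_smul, abs_of_nonneg hτ₀]
    exact mul_le_of_le_one_left hs hτ₁
  have hτs₀ := l1_nonneg (τ • u)
  calc ‖(exp (ℓ (θ + τ • u) - ℓ θ) * κ u) • h (τ • u)‖
      ≤ exp (ℓ (θ + τ • u)) * exp (-ℓ θ) * κ u * l1 (h (τ • u)) := by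
        refine (norm_le_l1 _).trans_eq ?_
        rw [l1_smul, abs_of_nonneg (by positivity), sub_eq_add_neg, exp_add]
    _ ≤ D * exp (ε * l1 u ^ η) * exp (-ℓ θ) * exp (-γ * l1 u ^ δ) * (c * l1 u ^ α) := by
        have := l1_nonneg (h (τ • u))
        gcongr
        · exact hℓ.trans (by gcongr)
        · exact hh.trans (by gcongr)
    _ = c * D * exp (-ℓ θ) * (l1 u ^ α * exp (ε * l1 u ^ η - γ * l1 u ^ δ)) := by
        rw [sub_eq_add_neg, exp_add, neg_mul]; ring

theorem exists_norm_integrand_le_rpow_neg {d m : ℕ} {κ ℓ : (Fin d → ℝ) → ℝ}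
    {h : (Fin d → ℝ) → Fin m → ℝ} {θ : Fin d → ℝ} {γ δ M η ε D c α : ℝ}
    (hκ_nonneg : ∀ u, 0 ≤ κ u) (hγ : 0 < γ) (hδ : 0 < δ)
    (hκ_tail : ∀ u : Fin d → ℝ, M < l1 u → κ u < exp (-γ * l1 u ^ δ))
    (hη : 0 ≤ η) (hηδ : η < δ) (hε : 0 ≤ ε)
    (hℓ : ∀ u : Fin d → ℝ, exp (ℓ (θ + u)) ≤ D * exp (ε * l1 u ^ η))
    (hα : 0 ≤ α) (hc : 0 ≤ c) (hh : ∀ u, l1 (h u) ≤ c * l1 u ^ α) (q : ℝ) :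
    ∃ K T : ℝ, ∀ (τ : ℝ) u, 0 < τ → τ ≤ 1 → T ≤ l1 u →
      ‖(exp (ℓ (θ + τ • u) - ℓ θ) * κ u) • h (τ • u)‖ ≤ K * l1 u ^ (-q) := by
  have hlim := tendsto_rpow_mul_exp_sub_rpow_atTop (α + q) (ε := ε) hγ hδ hηδ
  obtain ⟨T, hT⟩ := eventually_atTop.1 ((hlim.eventually_lt_const one_pos).and
    ((eventually_gt_atTop M).and (eventually_gt_atTop 0)))
  refine ⟨c * D * exp (-ℓ θ), T, fun τ u hτ hτ₁ hu => ?_⟩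
  obtain ⟨hlt, hMu, hpos⟩ := hT _ hu
  have hD : 0 ≤ D := nonneg_of_mul_nonneg_left ((exp_pos _).le.trans (hℓ 0)) (exp_pos _)
  calc ‖(exp (ℓ (θ + τ • u) - ℓ θ) * κ u) • h (τ • u)‖
      ≤ c * D * exp (-ℓ θ) * (l1 u ^ α * exp (ε * l1 u ^ η - γ * l1 u ^ δ)) :=
        norm_integrand_le hτ.le hτ₁ hη hε hc hα (hκ_nonneg u) (hκ_tail u hMu).le
          (hℓ _) (hh _)
    _ = c * D * exp (-ℓ θ) * l1 u ^ (-q) *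
          (l1 u ^ (α + q) * exp (ε * l1 u ^ η - γ * l1 u ^ δ)) := by
        rw [rpow_add hpos, rpow_neg hpos.le]
        field_simp
    _ ≤ c * D * exp (-ℓ θ) * l1 u ^ (-q) :=
        mul_le_of_le_one_right (by positivity) hlt.le

theorem stmt_11_general {d m : ℕ}
    (κ : (Fin d → ℝ) → ℝ) (ℓ : (Fin d → ℝ) → ℝ)
    (hκ_nonneg : ∀ u, 0 ≤ κ u)
    (γ δ M : ℝ) (hγ : 0 < γ) (hδ : 0 < δ)
    -- (K2)
    (hκ_tail : ∀ u : Fin d → ℝ, M < l1 u → κ u < Real.exp (-γ * l1 u ^ δ))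
    -- (L)
    (hℓ_growth : ∀ θ : Fin d → ℝ, ∃ η ε D : ℝ, 0 < η ∧ η < δ ∧ 0 < ε ∧ 0 < D ∧
      ∀ u : Fin d → ℝ, Real.exp (ℓ (θ + u)) ≤ D * Real.exp (ε * l1 u ^ η))
    (θ : Fin d → ℝ) (ρ α c : ℝ) (hρ : 0 < ρ) (hα : 0 ≤ α) (hc : 0 < c)
    (h : (Fin d → ℝ) → Fin m → ℝ)
    (hh : ∀ u, l1 (h u) ≤ c * l1 u ^ α) :
    ∀ μ : ℝ, ∃ C τ₀ : ℝ, 0 < τ₀ ∧ ∀ τ : ℝ, 0 < τ → τ ≤ τ₀ →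
      l1 (∫ u in {u : Fin d → ℝ | ρ < τ * l1 u},
            (Real.exp (ℓ (θ + τ • u) - ℓ θ) * κ u) • h (τ • u))
        ≤ C * τ ^ μ := by
  intro μ
  obtain ⟨η, ε, D, hη, hηδ, hε, -, hℓ⟩ := hℓ_growth θ
  obtain ⟨C, τ₀, hτ₀, hC⟩ := norm_setIntegral_tail_le
    (fun τ u => (exp (ℓ (θ + τ • u) - ℓ θ) * κ u) • h (τ • u)) hρ
    (exists_norm_integrand_le_rpow_neg hκ_nonneg hγ hδ hκ_tail hη.le hηδ hε.le hℓ hα hc.le hh) μ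
  refine ⟨m * C, τ₀, hτ₀, fun τ hτ hττ₀ => ?_⟩
  calc l1 _ ≤ m * ‖_‖ := l1_le_card_mul_norm _
    _ ≤ m * (C * τ ^ μ) := mul_le_mul_of_nonneg_left (hC τ hτ hττ₀) m.cast_nonneg
    _ = m * C * τ ^ μ := (mul_assoc _ _ _).symm

/-- Tail estimate for the unnormalized posterior integral: under (K2) and (L), the
integral over `{τ|u| > ρ}` of `h(τu) exp(ℓ(θ+τu)−ℓ(θ)) κ(u)` is `O(τ^μ)` for every
`μ ∈ ℝ`. -/
theorem stmt_11 {d m : ℕ} (hd : 1 ≤ d)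
    (κ : (Fin d → ℝ) → ℝ) (ℓ : (Fin d → ℝ) → ℝ)
    (hκ_meas : Measurable κ) (hκ_nonneg : ∀ u, 0 ≤ κ u)
    (hℓ_meas : Measurable ℓ)
    (γ δ M : ℝ) (hγ : 0 < γ) (hδ : 0 < δ) (hM : 0 < M)
    -- (K2)
    (hκ_tail : ∀ u : Fin d → ℝ, M < l1 u → κ u < Real.exp (-γ * l1 u ^ δ))
    -- (L)
    (hℓ_growth : ∀ θ : Fin d → ℝ, ∃ η ε D : ℝ, 0 < η ∧ η < δ ∧ 0 < ε ∧ 0 < D ∧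
      ∀ u : Fin d → ℝ, Real.exp (ℓ (θ + u)) ≤ D * Real.exp (ε * l1 u ^ η))
    (θ : Fin d → ℝ) (ρ α c : ℝ) (hρ : 0 < ρ) (hα : 0 ≤ α) (hc : 0 < c)
    (h : (Fin d → ℝ) → Fin m → ℝ) (hh_meas : Measurable h)
    (hh : ∀ u, l1 (h u) ≤ c * l1 u ^ α) :
    ∀ μ : ℝ, ∃ C τ₀ : ℝ, 0 < τ₀ ∧ ∀ τ : ℝ, 0 < τ → τ ≤ τ₀ →
      l1 (∫ u in {u : Fin d → ℝ | ρ < τ * l1 u},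
            (Real.exp (ℓ (θ + τ • u) - ℓ θ) * κ u) • h (τ • u))
        ≤ C * τ ^ μ :=
  stmt_11_general κ ℓ hκ_nonneg γ δ M hγ hδ hκ_tail hℓ_growth θ ρ α c hρ hα hc h hh
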